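/- Let n ≥ 3 and let S be a set of transpositions generating the symmetric group S_n such that the Cayley graph Cay(S_n, S) is normal (i.e., the image of the right regular representation of S_n in Aut(Cay(S_n, S)) is a normal subgroup). Then the automorphism group of Cay(S_n, S) is isomorphic to the direct product S_n × Aut(T(S)), where T(S) is the transposition graph of S. -/

import Mathlib

open Equiv

/-- The Cayley graph of `Sₙ = Perm (Fin n)` with connection set `S`:
vertices `h, g` are adjacent iff `g * h⁻¹ ∈ S` (for a symmetric identity-free
set `S`, such as a set of transpositions, `fromRel` yields exactly this relation). -/
def Cay (n : ℕ) (S : Set (Equiv.Perm (Fin n))) : SimpleGraph (Equiv.Perm (Fin n)) :=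
  SimpleGraph.fromRel (fun h g => g * h⁻¹ ∈ S)

/-- The transposition graph `T(S)` of `S`: vertices `i, j ∈ Fin n` are adjacent
iff the transposition `swap i j ∈ S`. -/
def TransGraph (n : ℕ) (S : Set (Equiv.Perm (Fin n))) : SimpleGraph (Fin n) :=
  SimpleGraph.fromRel (fun i j => Equiv.swap i j ∈ S)

/-- The automorphism group of a graph, as a subgroup of the symmetric group on
its vertex set. -/
def graphAut {V : Type*} (G : SimpleGraph V) : Subgroup (Equiv.Perm V) where
  carrier := {f | ∀ x y, G.Adj (f x) (f y) ↔ G.Adj x y}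
  one_mem' := by intro x y; simp
  mul_mem' := by
    intro a b ha hb x y
    simp only [Equiv.Perm.mul_apply]
    rw [ha, hb]
  inv_mem' := by
    intro a ha x y
    rw [← ha (a⁻¹ x) (a⁻¹ y)]
    simp

/-- The image `R(Sₙ)` of the right regular representation of `Sₙ` inside `Sym(Sₙ)`:
all permutations of the form `x ↦ x * a`. -/
def Rrep (n : ℕ) : Subgroup (Equiv.Perm (Equiv.Perm (Fin n))) where
  carrier := {f | ∃ a : Equiv.Perm (Fin n), f = Equiv.mulRight a}
  one_mem' := ⟨1, by ext x; simp⟩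
  mul_mem' := by
    rintro _ _ ⟨a, rfl⟩ ⟨b, rfl⟩
    exact ⟨b * a, by ext x; simp [mul_assoc]⟩
  inv_mem' := by
    rintro _ ⟨a, rfl⟩
    exact ⟨a⁻¹, by ext x; simp⟩

/-- The image `λ(Sₙ)` of the left regular representation of `Sₙ` inside `Sym(Sₙ)`:
all permutations of the form `x ↦ b⁻¹ * x`. -/
def LrepAll (n : ℕ) : Subgroup (Equiv.Perm (Equiv.Perm (Fin n))) where
  carrier := {f | ∃ b : Equiv.Perm (Fin n), f = Equiv.mulLeft b⁻¹}
  one_mem' := ⟨1, by ext x; simp⟩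
  mul_mem' := by
    rintro _ _ ⟨a, rfl⟩ ⟨b, rfl⟩
    exact ⟨b * a, by ext x; simp [mul_assoc]⟩
  inv_mem' := by
    rintro _ ⟨a, rfl⟩
    exact ⟨a⁻¹, by ext x; simp⟩

/-- The subgroup `λ(Aut(T(S))) = { x ↦ a⁻¹ * x : a ∈ Aut(T(S)) }` of `Sym(Sₙ)`. -/
def Lrep (n : ℕ) (S : Set (Equiv.Perm (Fin n))) :
    Subgroup (Equiv.Perm (Equiv.Perm (Fin n))) where
  carrier := {f | ∃ a ∈ graphAut (TransGraph n S), f = Equiv.mulLeft a⁻¹}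
  one_mem' := ⟨1, one_mem _, by ext x; simp⟩
  mul_mem' := by
    rintro _ _ ⟨a, ha, rfl⟩ ⟨b, hb, rfl⟩
    exact ⟨b * a, mul_mem hb ha, by ext x; simp [mul_assoc]⟩
  inv_mem' := by
    rintro _ ⟨a, ha, rfl⟩
    exact ⟨a⁻¹, inv_mem ha, by ext x; simp⟩

/-! An automorphism `f` of `Cay(Sₙ, S)` normalising the right translations, composed with the
right translation that brings `f 1` back to `1`, becomes a group automorphism of `Sₙ` preserving
`S`, hence mapping transpositions to transpositions. Such an automorphism permutes the points:
the images of the transpositions `(i j)`, `j ≠ i`, all move one common point `a i`, because three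
pairwise non-commuting transpositions either share a point ("star", `(s t u)² ≠ 1`) or form a
triangle (`(s t u)² = 1`), and this type is preserved. Hence it is conjugation by `a`, which must
be an automorphism of `T(S)`. Conversely `x ↦ a x c⁻¹` is an automorphism of `Cay(Sₙ, S)` for
`c ∈ Sₙ`, `a ∈ Aut(T(S))`, and since `Sₙ` has trivial centre this gives the isomorphism. -/

namespace Equiv.Perm

theorem exists_apply_ne_of_not_commute {X : Type*} {s t : Perm X} (h : ¬Commute s t) :
    ∃ x, s x ≠ x ∧ t x ≠ x := by
  by_contra! h'
  exact h (Disjoint.commute fun x => (em (s x = x)).imp_right (h' x))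

variable {X : Type*} [DecidableEq X]

theorem IsSwap.exists_eq_swap_of_apply_ne {s : Perm X} (hs : s.IsSwap) {p : X} (hp : s p ≠ p) :
    ∃ x, x ≠ p ∧ s = swap p x := by
  obtain ⟨a, b, hab, rfl⟩ := hs
  rcases (swap_apply_ne_self_iff.1 hp).2 with rfl | rfl
  · exact ⟨b, hab.symm, rfl⟩
  · exact ⟨a, hab, swap_comm _ _⟩

theorem IsSwap.eq_swap_of_apply_ne {s : Perm X} (hs : s.IsSwap) {p q : X} (hpq : p ≠ q)
    (hp : s p ≠ p) (hq : s q ≠ q) : s = swap p q := by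
  obtain ⟨x, -, rfl⟩ := hs.exists_eq_swap_of_apply_ne hp
  rcases (swap_apply_ne_self_iff.1 hq).2 with rfl | rfl
  · exact absurd rfl hpq
  · rfl

theorem not_commute_swap_swap {p x y : X} (hpx : p ≠ x) (hpy : p ≠ y) (hxy : x ≠ y) :
    ¬Commute (swap p x) (swap p y) := by
  intro h
  have := congrArg (· p) h.eq
  simp only [Perm.mul_apply, swap_apply_left, swap_apply_of_ne_of_ne hpy.symm hxy.symm,
    swap_apply_of_ne_of_ne hpx.symm hxy] at this
  exact hxy this.symm

theorem sq_swap_mul_swap_mul_swap_ne_one {p x y z : X} (hpy : p ≠ y) (hpz : p ≠ z)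
    (hxy : x ≠ y) (hxz : x ≠ z) (hyz : y ≠ z) :
    (swap p x * swap p y * swap p z) ^ 2 ≠ 1 := by
  intro h
  have := congrArg (· p) h
  simp only [sq, Perm.mul_apply, swap_apply_left, swap_apply_right, Perm.one_apply,
    swap_apply_of_ne_of_ne hpz.symm hyz.symm, swap_apply_of_ne_of_ne hpz.symm hxz.symm,
    swap_apply_of_ne_of_ne hpy.symm hxy.symm] at this
  exact hpy this.symm

theorem sq_swap_mul_swap_mul_swap_eq_one (p x y : X) :
    (swap p x * swap p y * swap x y) ^ 2 = 1 := by
  ext w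
  simp only [sq, Perm.mul_apply, swap_apply_def, Perm.one_apply]
  grind

theorem IsSwap.sq_mul_mul_ne_one {s t u : Perm X} (hs : s.IsSwap) (ht : t.IsSwap)
    (hu : u.IsSwap) (hst : s ≠ t) (hsu : s ≠ u) (htu : t ≠ u) {p : X} (hsp : s p ≠ p)
    (htp : t p ≠ p) (hup : u p ≠ p) : (s * t * u) ^ 2 ≠ 1 := by
  obtain ⟨x, -, rfl⟩ := hs.exists_eq_swap_of_apply_ne hsp
  obtain ⟨y, hyp, rfl⟩ := ht.exists_eq_swap_of_apply_ne htp
  obtain ⟨z, hzp, rfl⟩ := hu.exists_eq_swap_of_apply_ne hup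
  exact sq_swap_mul_swap_mul_swap_ne_one hyp.symm hzp.symm (by rintro rfl; exact hst rfl)
    (by rintro rfl; exact hsu rfl) (by rintro rfl; exact htu rfl)

/-- Otherwise `s, t, u` would form a triangle, for which `(s t u)² = 1`. -/
theorem IsSwap.apply_ne_of_not_commute {s t u : Perm X} (hs : s.IsSwap) (ht : t.IsSwap)
    (hu : u.IsSwap) (hst : s ≠ t) {p : X} (hsp : s p ≠ p) (htp : t p ≠ p)
    (hsu : ¬Commute s u) (htu : ¬Commute t u) (hsq : (s * t * u) ^ 2 ≠ 1) : u p ≠ p := by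
  intro hup
  have moves_other : ∀ {x}, ¬Commute (swap p x) u → u x ≠ x := by
    intro x h
    obtain ⟨q, hq, huq⟩ := exists_apply_ne_of_not_commute h
    rcases (swap_apply_ne_self_iff.1 hq).2 with rfl | rfl
    · exact absurd hup huq
    · exact huq
  obtain ⟨x, -, rfl⟩ := hs.exists_eq_swap_of_apply_ne hsp
  obtain ⟨y, -, rfl⟩ := ht.exists_eq_swap_of_apply_ne htp
  have hxy : x ≠ y := by rintro rfl; exact hst rfl
  rw [hu.eq_swap_of_apply_ne hxy (moves_other hsu) (moves_other htu)] at hsq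
  exact hsq (sq_swap_mul_swap_mul_swap_eq_one p x y)

theorem IsSwap.conj {s : Perm X} (hs : s.IsSwap) (c : Perm X) : (c * s * c⁻¹).IsSwap := by
  obtain ⟨x, y, hxy, rfl⟩ := hs
  exact ⟨c x, c y, c.injective.ne hxy, (swap_apply_apply c x y).symm⟩

theorem isSwap_map_of_isSwap_map (φ : Perm X ≃* Perm X) {s₀ : Perm X} (hs₀ : s₀.IsSwap)
    (hφs₀ : (φ s₀).IsSwap) {s : Perm X} (hs : s.IsSwap) : (φ s).IsSwap := by
  obtain ⟨x, y, hxy, rfl⟩ := hs₀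
  obtain ⟨z, w, hzw, rfl⟩ := hs
  obtain ⟨c, hc : c * φ (swap x y) * c⁻¹ = φ (swap z w)⟩ :=
    isConj_iff.1 (φ.toMonoidHom.map_isConj (isConj_swap hxy hzw))
  exact hc ▸ hφs₀.conj c

theorem eq_one_of_forall_commute (hX : 3 ≤ ENat.card X) {c : Perm X} (h : ∀ g, Commute c g) :
    c = 1 := by
  ext x
  rw [Perm.one_apply]
  by_contra hx
  obtain ⟨z, hzx, hzc⟩ := ENat.exists_ne_ne_of_three_le hX x (c x)
  have := congrArg (· x) (h (swap (c x) z)).eq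
  simp only [Perm.mul_apply, swap_apply_left,
    swap_apply_of_ne_of_ne (Ne.symm hx) hzx.symm] at this
  exact hzc this.symm

theorem exists_forall_apply_swap_apply_ne (hX : 3 ≤ ENat.card X) {φ : Perm X ≃* Perm X}
    (hφ : ∀ s : Perm X, s.IsSwap → (φ s).IsSwap) (i : X) :
    ∃ p, ∀ j, j ≠ i → φ (swap i j) p ≠ p := by
  have hswap : ∀ {j}, j ≠ i → (φ (swap i j)).IsSwap :=
    fun hj => hφ _ ⟨i, _, hj.symm, rfl⟩
  have hnc : ∀ {j k}, j ≠ i → k ≠ i → j ≠ k →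
      ¬Commute (φ (swap i j)) (φ (swap i k)) :=
    fun hj hk hjk h => not_commute_swap_swap hj.symm hk.symm hjk (by simpa using h.map φ.symm)
  obtain ⟨j₀, hj₀, -⟩ := ENat.exists_ne_ne_of_three_le hX i i
  obtain ⟨k₀, hk₀, hk₀j₀⟩ := ENat.exists_ne_ne_of_three_le hX i j₀
  obtain ⟨p, hpj₀, hpk₀⟩ := exists_apply_ne_of_not_commute (hnc hj₀ hk₀ hk₀j₀.symm)
  refine ⟨p, fun j hj => ?_⟩
  rcases eq_or_ne j j₀ with rfl | hjj₀
  · exact hpj₀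
  rcases eq_or_ne j k₀ with rfl | hjk₀
  · exact hpk₀
  refine (hswap hj₀).apply_ne_of_not_commute (hswap hk₀) (hswap hj)
    (φ.injective.ne ((swap_injective_of_left i).ne hk₀j₀.symm)) hpj₀ hpk₀
    (hnc hj₀ hj hjj₀.symm) (hnc hk₀ hj hjk₀.symm) ?_
  rw [← map_mul, ← map_mul, ← map_pow, map_ne_one_iff φ φ.injective]
  exact sq_swap_mul_swap_mul_swap_ne_one hk₀.symm hj.symm hk₀j₀.symm hjj₀.symm hjk₀.symm

variable [Finite X]

theorem exists_eq_conj_of_map_isSwap (hX : 3 ≤ ENat.card X) (φ : Perm X ≃* Perm X)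
    (hφ : ∀ s : Perm X, s.IsSwap → (φ s).IsSwap) : ∃ σ : Perm X, φ = MulAut.conj σ := by
  choose a ha using exists_forall_apply_swap_apply_ne hX hφ
  have hswap : ∀ {i j : X}, i ≠ j → (φ (swap i j)).IsSwap :=
    fun hij => hφ _ ⟨_, _, hij, rfl⟩
  have ha' : ∀ {i j : X}, i ≠ j → φ (swap i j) (a j) ≠ a j := fun {i j} hij => by
    rw [swap_comm]
    exact ha j i hij
  -- Otherwise the images of the triangle `(i j), (i k), (j k)` would form a star at `a i = a j`.
  have hinj : Function.Injective a := by
    intro i j hij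
    by_contra hne
    obtain ⟨k, hki, hkj⟩ := ENat.exists_ne_ne_of_three_le hX i j
    refine (hswap hne).sq_mul_mul_ne_one (hswap hki.symm) (hswap hkj.symm)
      (φ.injective.ne ((swap_injective_of_left i).ne (Ne.symm hkj)))
      (φ.injective.ne (by rw [swap_comm i j]; exact (swap_injective_of_left j).ne hki.symm))
      (φ.injective.ne (by rw [swap_comm i k, swap_comm j k]; exact
        (swap_injective_of_left k).ne hne))
      (ha i j (Ne.symm hne)) (ha i k hki) (hij ▸ ha j k hkj) ?_
    rw [← map_mul, ← map_mul, ← map_pow, sq_swap_mul_swap_mul_swap_eq_one, map_one]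
  refine ⟨Equiv.ofBijective a hinj.bijective_of_finite, MulEquiv.toMonoidHom_injective <|
    MonoidHom.eq_of_eqOn_dense closure_isSwap ?_⟩
  rintro _ ⟨i, j, hij, rfl⟩
  rw [MulEquiv.coe_toMonoidHom, MulEquiv.coe_toMonoidHom, MulAut.conj_apply, ← swap_apply_apply]
  exact (hswap hij).eq_swap_of_apply_ne (hinj.ne hij) (ha i j hij.symm) (ha' hij)

end Equiv.Perm

theorem map_mul_of_semiconj_mul_right {G : Type*} [Group G] {f : G → G} (h1 : f 1 = 1)
    (h : ∀ g, ∃ d, Function.Semiconj f (· * g) (· * d)) (x y : G) :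
    f (x * y) = f x * f y := by
  obtain ⟨d, hd⟩ := h y
  have hy : f y = d := by simpa [h1] using hd 1
  rw [hd x, hy]

open Equiv.Perm

section Cayley

variable {n : ℕ} {S : Set (Perm (Fin n))}

theorem cay_adj_iff {x y : Perm (Fin n)} :
    (Cay n S).Adj x y ↔ x ≠ y ∧ (y * x⁻¹ ∈ S ∨ x * y⁻¹ ∈ S) :=
  SimpleGraph.fromRel_adj _ _ _

theorem cay_adj_one_iff (hS : ∀ s ∈ S, s.IsSwap) {g : Perm (Fin n)} :
    (Cay n S).Adj 1 g ↔ g ∈ S := by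
  simp only [cay_adj_iff, inv_one, mul_one, one_mul]
  constructor
  · rintro ⟨-, hg | hg⟩
    · exact hg
    · obtain ⟨x, y, -, hxy⟩ := hS _ hg
      rwa [inv_eq_iff_eq_inv.1 hxy, swap_inv, ← hxy]
  · intro hg
    obtain ⟨x, y, hxy, rfl⟩ := hS _ hg
    exact ⟨Ne.symm (swap_eq_one_iff.not.2 hxy), Or.inl hg⟩

theorem transGraph_adj_iff {i j : Fin n} :
    (TransGraph n S).Adj i j ↔ i ≠ j ∧ swap i j ∈ S := by
  rw [TransGraph, SimpleGraph.fromRel_adj, swap_comm j i, or_self]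

theorem mem_graphAut_transGraph_iff (hS : ∀ s ∈ S, s.IsSwap) {a : Perm (Fin n)} :
    a ∈ graphAut (TransGraph n S) ↔ ∀ g, a * g * a⁻¹ ∈ S ↔ g ∈ S := by
  have conj_mem : ∀ b ∈ graphAut (TransGraph n S), ∀ g ∈ S, b * g * b⁻¹ ∈ S := by
    rintro b hb _ hg
    obtain ⟨x, y, hxy, rfl⟩ := hS _ hg
    rw [← swap_apply_apply]
    exact (transGraph_adj_iff.1 ((hb x y).2 (transGraph_adj_iff.2 ⟨hxy, hg⟩))).2
  refine ⟨fun ha g => ⟨fun hg => ?_, conj_mem a ha g⟩, fun ha x y => ?_⟩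
  · simpa [mul_assoc] using conj_mem a⁻¹ (inv_mem ha) _ hg
  · rw [transGraph_adj_iff, transGraph_adj_iff, swap_apply_apply, ha, a.injective.ne_iff]

theorem mulRight_mem_graphAut_cay (c : Perm (Fin n)) : Equiv.mulRight c ∈ graphAut (Cay n S) := by
  intro x y
  simp [cay_adj_iff, mul_assoc]

theorem mulLeft_mem_graphAut_cay {a : Perm (Fin n)} (ha : ∀ g, a * g * a⁻¹ ∈ S ↔ g ∈ S) :
    Equiv.mulLeft a ∈ graphAut (Cay n S) := by
  intro x y
  have hconj : ∀ u v : Perm (Fin n), a * u * (a * v)⁻¹ = a * (u * v⁻¹) * a⁻¹ := by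
    intro u v; group
  simp only [Equiv.coe_mulLeft, cay_adj_iff, ne_eq, mul_right_inj, hconj, ha]

theorem semiconj_mul_right_of_normal (hnormal : ((Rrep n).subgroupOf (graphAut (Cay n S))).Normal)
    {ψ : Perm (Perm (Fin n))} (hψ : ψ ∈ graphAut (Cay n S)) (g : Perm (Fin n)) :
    ∃ d, Function.Semiconj ψ (· * g) (· * d) := by
  obtain ⟨d, hd⟩ := (Subgroup.mem_subgroupOf.1 <| hnormal.conj_mem
    ⟨Equiv.mulRight g, mulRight_mem_graphAut_cay g⟩ (Subgroup.mem_subgroupOf.2 ⟨g, rfl⟩)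
    ⟨ψ, hψ⟩)
  refine ⟨d, fun x => ?_⟩
  simpa using congrArg (· (ψ x)) hd

theorem exists_mem_graphAut_transGraph_eq_conj (hn : 3 ≤ n) (hS : ∀ s ∈ S, s.IsSwap)
    (hgen : Subgroup.closure S = ⊤)
    (hnormal : ((Rrep n).subgroupOf (graphAut (Cay n S))).Normal)
    {ψ : Perm (Perm (Fin n))} (hψ : ψ ∈ graphAut (Cay n S)) (hψ1 : ψ 1 = 1) :
    ∃ σ ∈ graphAut (TransGraph n S), ∀ x, ψ x = σ * x * σ⁻¹ := by
  let φ : Perm (Fin n) ≃* Perm (Fin n) :=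
    MulEquiv.mk' ψ (map_mul_of_semiconj_mul_right hψ1 (semiconj_mul_right_of_normal hnormal hψ))
  have hφS : ∀ g, φ g ∈ S ↔ g ∈ S := fun g => by
    rw [← cay_adj_one_iff hS, ← cay_adj_one_iff hS, ← hψ 1 g, hψ1]
    rfl
  obtain ⟨s₀, hs₀⟩ : S.Nonempty := by
    rw [Set.nonempty_iff_ne_empty]
    rintro rfl
    have : Nontrivial (Fin n) := Fin.nontrivial_iff_two_le.2 (by omega)
    rw [Subgroup.closure_empty] at hgen
    exact bot_ne_top hgen
  obtain ⟨σ, hσ⟩ := exists_eq_conj_of_map_isSwap (by simpa using hn) φ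
    fun s => isSwap_map_of_isSwap_map φ (hS s₀ hs₀) (hS _ ((hφS s₀).2 hs₀))
  refine ⟨σ, (mem_graphAut_transGraph_iff hS).2 fun g => ?_, fun x => ?_⟩
  · rw [← hφS g, hσ, MulAut.conj_apply]
  · rw [← MulAut.conj_apply, ← hσ]
    rfl

def cayProdHom (hS : ∀ s ∈ S, s.IsSwap) :
    Perm (Fin n) × graphAut (TransGraph n S) →* graphAut (Cay n S) where
  toFun p := ⟨Equiv.mulLeft (p.2 : Perm (Fin n)) * Equiv.mulRight p.1⁻¹,
    mul_mem (mulLeft_mem_graphAut_cay ((mem_graphAut_transGraph_iff hS).1 p.2.2))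
      (mulRight_mem_graphAut_cay _)⟩
  map_one' := Subtype.ext <| Equiv.ext fun x => by simp
  map_mul' _ _ := Subtype.ext <| Equiv.ext fun x => by simp [mul_assoc]

theorem cayProdHom_apply (hS : ∀ s ∈ S, s.IsSwap)
    (p : Perm (Fin n) × graphAut (TransGraph n S)) (x : Perm (Fin n)) :
    (cayProdHom hS p : Perm (Perm (Fin n))) x = p.2 * (x * p.1⁻¹) :=
  rfl

theorem cayProdHom_injective (hn : 3 ≤ n) (hS : ∀ s ∈ S, s.IsSwap) :
    Function.Injective (cayProdHom hS) := by
  rw [injective_iff_map_eq_one]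
  rintro ⟨c, a⟩ h
  have hx : ∀ x, (a : Perm (Fin n)) * (x * c⁻¹) = x := fun x => by
    simpa [cayProdHom_apply] using congrArg (fun f : graphAut (Cay n S) => (f : Perm _) x) h
  have hac : (a : Perm (Fin n)) = c := by simpa using hx c
  have hc : c = 1 := eq_one_of_forall_commute (by simpa using hn) fun x => by
    have := hx x
    rw [hac, ← mul_assoc, mul_inv_eq_iff_eq_mul] at this
    exact this
  exact Prod.ext hc (Subtype.ext (hac.trans hc))

theorem cayProdHom_surjective (hn : 3 ≤ n) (hS : ∀ s ∈ S, s.IsSwap)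
    (hgen : Subgroup.closure S = ⊤)
    (hnormal : ((Rrep n).subgroupOf (graphAut (Cay n S))).Normal) :
    Function.Surjective (cayProdHom hS) := by
  rintro ⟨f, hf⟩
  obtain ⟨σ, hσ, hψ⟩ := exists_mem_graphAut_transGraph_eq_conj hn hS hgen hnormal
    (mul_mem (mulRight_mem_graphAut_cay (f 1)⁻¹) hf) (by simp)
  refine ⟨((f 1)⁻¹ * σ, ⟨σ, hσ⟩), Subtype.ext <| Equiv.ext fun x => ?_⟩
  have hfx : f x = σ * x * σ⁻¹ * f 1 := by
    rw [← hψ x]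
    simp
  rw [cayProdHom_apply, hfx]
  group

end Cayley

/-- Let `n ≥ 3` and let `S` be a set of transpositions generating `Sₙ`
such that the Cayley graph `Cay(Sₙ, S)` is normal (the image of the right regular
representation is a normal subgroup of `Aut(Cay(Sₙ, S))`). Then
`Aut(Cay(Sₙ, S)) ≅ Sₙ × Aut(T(S))`, where `T(S)` is the transposition graph of `S`. -/
theorem aut_normal_cayley_eq_prod (n : ℕ) (hn : 3 ≤ n) (S : Set (Equiv.Perm (Fin n)))
    (hS : ∀ s ∈ S, Equiv.Perm.IsSwap s)
    (hgen : Subgroup.closure S = ⊤)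
    (hnormal : ((Rrep n).subgroupOf (graphAut (Cay n S))).Normal) :
    Nonempty
      ((graphAut (Cay n S)) ≃* Equiv.Perm (Fin n) × (graphAut (TransGraph n S))) :=
  ⟨(MulEquiv.ofBijective (cayProdHom hS)
    ⟨cayProdHom_injective hn hS, cayProdHom_surjective hn hS hgen hnormal⟩).symm⟩
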